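/- arXiv:2009.02389 — 2 statements merged into one kernel-verified Lean document; each statement's English description precedes it below -/
import Mathlib

section
/- Let s be a weak composition, T an s-Tamari tree, and (a,b), (c,d) Tamari tree ascents of T with a < c. Then the three sets A^Tam_T(a,b), A^Tam_T(c,d), and F^Tam_T(a,c) are pairwise disjoint. -/
open scoped Classical

/-- An `s`-decreasing tree with internal vertices `1,…,n` (the root is `n`), encoded by
recording, for each non-root internal vertex `v`, its parent `parent v` (an internal vertex
with a larger label, so that labels decrease away from the root) and the index `idx v` of
the child slot of `parent v` (among `0,…,s (parent v)`, left to right) containing `v`.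
Distinct internal vertices occupy distinct child slots; all remaining slots are leaves. -/
structure SDecTree (n : ℕ) (s : ℕ → ℕ) where
  parent : ℕ → ℕ
  idx : ℕ → ℕ
  parent_gt : ∀ v, 1 ≤ v → v < n → v < parent v
  parent_le : ∀ v, 1 ≤ v → v < n → parent v ≤ n
  idx_le : ∀ v, 1 ≤ v → v < n → idx v ≤ s (parent v)
  slot_inj : ∀ v w, 1 ≤ v → v < n → 1 ≤ w → w < n →
      parent v = parent w → idx v = idx w → v = w
  parent_out : ∀ v, v = 0 ∨ n ≤ v → parent v = 0
  idx_out : ∀ v, v = 0 ∨ n ≤ v → idx v = 0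

namespace SDecTree

variable {n : ℕ} {s : ℕ → ℕ}

/-- `y` is a weak ancestor of `x`, i.e. `x` is a labeled vertex of the subtree `T^y`. -/
def Descend (T : SDecTree n s) (x y : ℕ) : Prop :=
  ∃ k, T.parent^[k] x = y ∧ ∀ m ≤ k, 1 ≤ T.parent^[m] x ∧ T.parent^[m] x ≤ n

/-- `x` is a labeled vertex of the subtree `T^y_j` rooted at the `j`-th child of `y`. -/
def InSub (T : SDecTree n s) (y j x : ℕ) : Prop :=
  ∃ c, T.Descend x c ∧ T.parent c = y ∧ T.idx c = j

/-- `x` lies strictly left of `y` in the planar tree `T`. -/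
def LeftOf (T : SDecTree n s) (x y : ℕ) : Prop :=
  ∃ z j₁ j₂, j₁ < j₂ ∧ T.InSub z j₁ x ∧ T.InSub z j₂ y

/-- The cardinality `#_T(y,x)` of the pair `(y,x)`: it is `j` if `x ∈ T^y_j`
(so `0` if `x ∈ T^y_0` and `s y` if `x ∈ T^y_{s y}`), `0` if `x` is left of `y`, and
`s y` if `x` is right of `y`; it is `0` for out-of-range pairs. -/
noncomputable def card (T : SDecTree n s) (y x : ℕ) : ℕ :=
  if h : ∃ j, T.InSub y j x then h.choose
  else if 1 ≤ x ∧ x < y ∧ y ≤ n ∧ ¬ T.LeftOf x y then s y else 0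

/-- `x` is a labeled vertex of `T^a ∖ 0`, i.e. of `T^a` with `T^a_0` replaced by a leaf. -/
def InSubMinus0 (T : SDecTree n s) (a x : ℕ) : Prop :=
  x = a ∨ ∃ j, 0 < j ∧ T.InSub a j x

/-- `(a,b)` is a tree ascent of `T`. -/
def TreeAscent (T : SDecTree n s) (a b : ℕ) : Prop :=
  1 ≤ a ∧ a < b ∧ b ≤ n ∧
  (∃ i, i < s b ∧ T.InSub b i a) ∧
  (∀ e j, a < e → e < b → T.InSub e j a → j = s e) ∧
  (0 < s a → ∀ x, ¬ T.InSub a (s a) x)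

end SDecTree

/-- A multi-inversion set (encoded by its multiplicity function) is transitive:
if `a < b < c` then `#(b,a) = 0` or `#(c,a) ≥ #(c,b)`. -/
def IsTransitiveInv (I : ℕ → ℕ → ℕ) : Prop :=
  ∀ a b c, a < b → b < c → I b a = 0 ∨ I c b ≤ I c a

/-- The transitive closure of a multi-inversion set: the smallest (by inclusion, i.e.
pointwise on multiplicities) transitive multi-inversion set containing it. -/
noncomputable def tcInv (I : ℕ → ℕ → ℕ) : ℕ → ℕ → ℕ := fun y x =>
  sInf {m | ∃ J : ℕ → ℕ → ℕ, IsTransitiveInv J ∧ (∀ y' x', I y' x' ≤ J y' x') ∧ J y x = m}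

/-- Add one copy of the inversion `(b,a)` to `I`, capping the multiplicity at `s b`. -/
def addInv (s : ℕ → ℕ) (I : ℕ → ℕ → ℕ) (b a : ℕ) : ℕ → ℕ → ℕ := fun y x =>
  if y = b ∧ x = a then min (I y x + 1) (s y) else I y x

namespace SDecTree

variable {n : ℕ} {s : ℕ → ℕ}

/-- The `s`-weak order: `T ⪯ Z` iff `#_T(y,x) ≤ #_Z(y,x)` for all pairs. -/
def wle (T Z : SDecTree n s) : Prop := ∀ y x, T.card y x ≤ Z.card y x

/-- Strict `s`-weak order. -/
def wlt (T Z : SDecTree n s) : Prop := wle T Z ∧ ¬ wle Z T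

/-- Cover relation in the `s`-weak order. -/
def wcov (T Z : SDecTree n s) : Prop := wlt T Z ∧ ∀ U, wlt T U → wlt U Z → False

/-- `W` is the join of `T` and `Z` in the `s`-weak order. -/
def IsJoin (T Z W : SDecTree n s) : Prop :=
  wle T W ∧ wle Z W ∧ ∀ U, wle T U → wle Z U → wle W U

/-- `Z` is the `s`-tree rotation of `T` along the tree ascent `(a,b)`, i.e.
`inv Z = (inv T + (b,a))^tc`. -/
def IsRotation (T Z : SDecTree n s) (a b : ℕ) : Prop :=
  T.TreeAscent a b ∧
  ∀ y x, 1 ≤ x → x < y → y ≤ n → Z.card y x = tcInv (addInv s T.card b a) y x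

/-- The set `A_T(a,b)` of inversions added by a rotation producing `Z`: the pairs `(f,e)`
with `#_Z(f,e) > #_T(f,e)`. -/
def Aset (T Z : SDecTree n s) : Set (ℕ × ℕ) :=
  {p | T.card p.1 p.2 < Z.card p.1 p.2}

/-- The set `A_T(a,b)` described directly via the transitive closure. -/
def ARot (T : SDecTree n s) (a b : ℕ) : Set (ℕ × ℕ) :=
  {p | T.card p.1 p.2 < tcInv (addInv s T.card b a) p.1 p.2}

/-- The set `F_T(a,c)` (here `b` and `d` are the partners of `a` and `c` in the
respective tree ascents `(a,b)` and `(c,d)`): it is `{(d,e) : e ∈ T^a∖0}` if `b = c`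
and `a ∈ T^c_0`, and empty otherwise. -/
def Fset (T : SDecTree n s) (a b c d : ℕ) : Set (ℕ × ℕ) :=
  {p | b = c ∧ T.InSub c 0 a ∧ p.1 = d ∧ T.InSubMinus0 a p.2}

/-- `T` is an `s`-Tamari tree: `#_T(c,a) ≤ #_T(c,b)` whenever `a < b < c`. -/
def IsTamari (T : SDecTree n s) : Prop :=
  ∀ a b c, a < b → b < c → T.card c a ≤ T.card c b

/-- `(a,b)` is a Tamari tree ascent of `T`: `a` is a non-rightmost child of `b`. -/
def TamariAscent (T : SDecTree n s) (a b : ℕ) : Prop :=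
  1 ≤ a ∧ a < n ∧ T.parent a = b ∧ T.card b a < s b

/-- `Z` is the `s`-Tamari rotation of `T` along the Tamari tree ascent `(a,b)`. -/
def IsTamRotation (T Z : SDecTree n s) (a b : ℕ) : Prop :=
  T.TamariAscent a b ∧
  ∀ y x, 1 ≤ x → x < y → y ≤ n → Z.card y x = tcInv (addInv s T.card b a) y x

/-- Cover relation in the `s`-Tamari lattice. -/
def tamcov (T Z : SDecTree n s) : Prop :=
  IsTamari T ∧ IsTamari Z ∧ wlt T Z ∧ ∀ U, IsTamari U → wlt T U → wlt U Z → False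

/-- `W` is the join of `T` and `Z` in the `s`-Tamari lattice. -/
def IsTamJoin (T Z W : SDecTree n s) : Prop :=
  IsTamari W ∧ wle T W ∧ wle Z W ∧ ∀ U, IsTamari U → wle T U → wle Z U → wle W U

/-- The open interval `(T,Z)` in the `s`-weak order. -/
def OpenInterval (T Z : SDecTree n s) : Set (SDecTree n s) := {U | wlt T U ∧ wlt U Z}

/-- A set of trees forming a chain in the `s`-weak order. -/
def IsChainSet (C : Set (SDecTree n s)) : Prop :=
  C.Pairwise fun U V => wlt U V ∨ wlt V U

/-- The geometric realization of the order complex `Δ(T,Z)` of the open interval `(T,Z)`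
in the `s`-weak order: the space of finitely supported probability vectors on the vertex
set whose support is a chain of the open interval. -/
def orderComplex (T Z : SDecTree n s) : Set (SDecTree n s → ℝ) :=
  {f | (∀ U, 0 ≤ f U) ∧ (Function.support f).Finite ∧
    Function.support f ⊆ OpenInterval T Z ∧ IsChainSet (Function.support f) ∧
    ∑ᶠ U, f U = 1}

/-- The geometric realization of the order complex of the open interval `(T,Z)` in the
`s`-Tamari lattice. -/
def tamOrderComplex (T Z : SDecTree n s) : Set (SDecTree n s → ℝ) :=
  {f | (∀ U, 0 ≤ f U) ∧ (Function.support f).Finite ∧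
    Function.support f ⊆ {U | IsTamari U ∧ wlt T U ∧ wlt U Z} ∧
    IsChainSet (Function.support f) ∧ ∑ᶠ U, f U = 1}

end SDecTree

/-- The list of labels of the consecutive cover relations along a saturated chain,
recorded as a list of poset elements. -/
def labelsOf {α : Type*} (lab : α → α → ℕ) (L : List α) : List ℕ :=
  (L.zip L.tail).map fun p => lab p.1 p.2

/-! The Tamari rotation along `(a,b)` adds only inversions `(b,e)` with `e ∈ T^a ∖ 0`. Indeed,
raising `#(b,x)` to `max (#(b,x)) (#(b,a) + 1)` for `x = a` and for every `x` with `#(a,x) > 0`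
turns the (transitive) multi-inversion set of `T` into a transitive one containing
`inv T + (b,a)`, and the only such `x` outside `T^a ∖ 0` lie right of `a`, where already
`#(b,x) > #(b,a)`. Hence `A(a,b)` and `A(c,d)` live in the disjoint subtrees of the siblings `a`
and `c` when `b = d`, `A(a,b)` and `F(a,c)` have first coordinates `b = c < d`, and `F(a,c)` only
involves `T^a ⊆ T^c_0` while `A(c,d)` only involves `T^c ∖ 0`. -/

section MultiInversion

variable {I J : ℕ → ℕ → ℕ} {a b : ℕ}

theorem tcInv_le (hJ : IsTransitiveInv J) (hIJ : ∀ y x, I y x ≤ J y x) (y x : ℕ) :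
    tcInv I y x ≤ J y x :=
  Nat.sInf_le ⟨J, hJ, hIJ, rfl⟩

def rotationBound (I : ℕ → ℕ → ℕ) (a b : ℕ) : ℕ → ℕ → ℕ := fun y x =>
  if y = b ∧ (x = a ∨ 0 < I a x) then max (I b x) (I b a + 1) else I y x

theorem addInv_le_rotationBound (s : ℕ → ℕ) (I : ℕ → ℕ → ℕ) (a b y x : ℕ) :
    addInv s I b a y x ≤ rotationBound I a b y x := by
  unfold addInv rotationBound
  by_cases h : y = b ∧ x = a
  · obtain ⟨rfl, rfl⟩ := h
    simp
  · rw [if_neg h]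
    split_ifs with hS
    · exact hS.1 ▸ le_max_left _ _
    · exact le_rfl

theorem IsTransitiveInv.rotationBound (hI : IsTransitiveInv I)
    (hsupp : ∀ y x, I y x ≠ 0 → x < y) (hab : a < b) (hb : ∀ z, b < z → I z b ≤ I z a) :
    IsTransitiveInv (rotationBound I a b) := by
  intro x y z hxy hyz
  simp only [_root_.rotationBound]
  rcases eq_or_ne y b with rfl | hyb
  · simp only [hyz.ne', false_and, if_false]
    split_ifs with hS
    · right
      rcases hS.2 with rfl | hpos
      · exact hb z hyz
      · exact (hb z hyz).trans
          ((hI x a z (hsupp a x hpos.ne') (hab.trans hyz)).resolve_left hpos.ne')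
    · exact hI x y z hxy hyz
  simp only [hyb, false_and, if_false]
  by_cases h0 : I y x = 0
  · exact Or.inl h0
  right
  have hle : I z y ≤ I z x := (hI x y z hxy hyz).resolve_left h0
  rcases eq_or_ne z b with rfl | hzb
  · have hS : y = a ∨ 0 < I a y → x = a ∨ 0 < I a x := by
      rintro (rfl | hpos)
      · exact Or.inr (Nat.pos_of_ne_zero h0)
      · exact Or.inr (hpos.trans_le ((hI x y a hxy (hsupp a y hpos.ne')).resolve_left h0))
    split_ifs with hy hx hx
    · exact max_le_max hle le_rfl
    · exact absurd (hS hy.2) fun h => hx ⟨rfl, h⟩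
    · exact le_max_of_le_left hle
    · exact hle
  · simp only [hzb, false_and, if_false]
    exact hle

theorem IsTransitiveInv.eq_and_le_of_lt_tcInv_addInv (hI : IsTransitiveInv I)
    (hsupp : ∀ y x, I y x ≠ 0 → x < y) (hab : a < b) (hb : ∀ z, b < z → I z b ≤ I z a)
    {s : ℕ → ℕ} {y x : ℕ} (h : I y x < tcInv (addInv s I b a) y x) :
    y = b ∧ (x = a ∨ 0 < I a x) ∧ I b x ≤ I b a := by
  have hlt := h.trans_le
    (tcInv_le (hI.rotationBound hsupp hab hb) (addInv_le_rotationBound s I a b) y x)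
  unfold _root_.rotationBound at hlt
  split_ifs at hlt with hS
  · obtain ⟨rfl, hx⟩ := hS
    exact ⟨rfl, hx, by omega⟩
  · exact absurd hlt (lt_irrefl _)

end MultiInversion

namespace SDecTree

variable {n : ℕ} {s : ℕ → ℕ} (T : SDecTree n s)

theorem lt_parent {v : ℕ} (h : T.parent v ≠ 0) : 1 ≤ v ∧ v < n ∧ v < T.parent v := by
  have hv : 1 ≤ v ∧ v < n := by
    by_contra hv
    exact h (T.parent_out v (by omega))
  exact ⟨hv.1, hv.2, T.parent_gt v hv.1 hv.2⟩

theorem descend_bounds {x y : ℕ} (h : T.Descend x y) : 1 ≤ x ∧ x ≤ n ∧ 1 ≤ y ∧ y ≤ n := by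
  obtain ⟨k, rfl, hv⟩ := h
  exact ⟨(hv 0 k.zero_le).1, (hv 0 k.zero_le).2, hv k le_rfl⟩

theorem descend_refl {x : ℕ} (h₁ : 1 ≤ x) (h₂ : x ≤ n) : T.Descend x x :=
  ⟨0, rfl, fun m hm => by obtain rfl : m = 0 := (by omega); exact ⟨h₁, h₂⟩⟩

theorem le_of_descend {x y : ℕ} (h : T.Descend x y) : x ≤ y := by
  obtain ⟨k, rfl, hv⟩ := h
  induction k with
  | zero => exact le_rfl
  | succ k ih =>
    have hk : T.parent (T.parent^[k] x) ≠ 0 := by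
      have := (hv (k + 1) le_rfl).1
      rw [Function.iterate_succ_apply'] at this
      omega
    rw [Function.iterate_succ_apply']
    exact (ih fun m hm => hv m (by omega)).trans (T.lt_parent hk).2.2.le

theorem descend_parent {x c : ℕ} (h : T.Descend x c) (hc : T.parent c ≠ 0) :
    T.Descend x (T.parent c) := by
  obtain ⟨k, rfl, hv⟩ := h
  obtain ⟨h₁, hn, hlt⟩ := T.lt_parent hc
  refine ⟨k + 1, Function.iterate_succ_apply' .., fun m hm => ?_⟩
  rcases hm.lt_or_eq with hm | rfl
  · exact hv m (by omega)
  · rw [Function.iterate_succ_apply']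
    exact ⟨by omega, T.parent_le _ h₁ hn⟩

theorem descend_trans {x y z : ℕ} (h₁ : T.Descend x y) (h₂ : T.Descend y z) :
    T.Descend x z := by
  obtain ⟨k₁, rfl, hv₁⟩ := h₁
  obtain ⟨k₂, rfl, hv₂⟩ := h₂
  refine ⟨k₂ + k₁, Function.iterate_add_apply .., fun m hm => ?_⟩
  rcases le_or_gt m k₁ with hm' | hm'
  · exact hv₁ m hm'
  · rw [show m = (m - k₁) + k₁ by omega, Function.iterate_add_apply]
    exact hv₂ (m - k₁) (by omega)

theorem descend_total {x u v : ℕ} (hu : T.Descend x u) (hv : T.Descend x v) :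
    T.Descend u v ∨ T.Descend v u := by
  have key : ∀ {k₁ k₂ : ℕ}, k₁ ≤ k₂ → (∀ m ≤ k₂, 1 ≤ T.parent^[m] x ∧ T.parent^[m] x ≤ n) →
      T.Descend (T.parent^[k₁] x) (T.parent^[k₂] x) := fun {k₁ k₂} hk hv =>
    ⟨k₂ - k₁, by rw [← Function.iterate_add_apply, Nat.sub_add_cancel hk],
      fun m hm => by rw [← Function.iterate_add_apply]; exact hv (m + k₁) (by omega)⟩
  obtain ⟨k₁, rfl, hv₁⟩ := hu
  obtain ⟨k₂, rfl, hv₂⟩ := hv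
  rcases le_total k₁ k₂ with hk | hk
  · exact Or.inl (key hk hv₂)
  · exact Or.inr (key hk hv₁)

theorem descend_shift {x y : ℕ} (h : T.Descend x y) (hne : x ≠ y) :
    T.Descend (T.parent x) y := by
  obtain ⟨_ | k, hk, hv⟩ := h
  · exact absurd hk hne
  · refine ⟨k, by rwa [← Function.iterate_succ_apply], fun m hm => ?_⟩
    rw [← Function.iterate_succ_apply]
    exact hv (m + 1) (by omega)

theorem descend_inSub {x y : ℕ} (h : T.Descend x y) (hne : x ≠ y) : ∃ j, T.InSub y j x := by
  obtain ⟨_ | k, hk, hv⟩ := h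
  · exact absurd hk hne
  · refine ⟨_, T.parent^[k] x, ⟨k, rfl, fun m hm => hv m (by omega)⟩, ?_, rfl⟩
    rw [← hk, Function.iterate_succ_apply']

theorem eq_of_descend_of_parent_eq {a c : ℕ} (h : T.Descend a c)
    (hp : T.parent a = T.parent c) : a = c := by
  by_contra hne
  have hpc := T.descend_shift h hne
  have hc : T.parent c ≠ 0 := by have := (T.descend_bounds hpc).1; omega
  have := (T.lt_parent hc).2.2
  have := T.le_of_descend hpc
  omega

theorem eq_of_parent_eq_of_descend {x a c : ℕ} (ha : T.Descend x a) (hc : T.Descend x c)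
    (hp : T.parent a = T.parent c) : a = c :=
  (T.descend_total ha hc).elim (T.eq_of_descend_of_parent_eq · hp)
    fun h => (T.eq_of_descend_of_parent_eq h hp.symm).symm

theorem inSub_unique {y j j' x : ℕ} (h : T.InSub y j x) (h' : T.InSub y j' x) : j = j' := by
  obtain ⟨c, hd, hp, rfl⟩ := h
  obtain ⟨c', hd', hp', rfl⟩ := h'
  rw [T.eq_of_parent_eq_of_descend hd hd' (hp.trans hp'.symm)]

theorem inSub_of_descend {x w v i : ℕ} (hxw : T.Descend x w) (h : T.InSub v i w) :
    T.InSub v i x := by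
  obtain ⟨c, hd, hp, hi⟩ := h
  exact ⟨c, T.descend_trans hxw hd, hp, hi⟩

theorem descend_of_inSub {y j x : ℕ} (hy : 1 ≤ y) (h : T.InSub y j x) : T.Descend x y := by
  obtain ⟨c, hd, rfl, -⟩ := h
  exact T.descend_parent hd (by omega)

theorem lt_of_inSub {y j x : ℕ} (hy : 1 ≤ y) (h : T.InSub y j x) : x < y := by
  obtain ⟨c, hd, rfl, -⟩ := h
  exact (T.le_of_descend hd).trans_lt (T.lt_parent (by omega)).2.2

theorem index_le_of_inSub {y j x : ℕ} (hy : 1 ≤ y) (h : T.InSub y j x) : j ≤ s y := by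
  obtain ⟨c, -, rfl, rfl⟩ := h
  obtain ⟨h₁, hn, -⟩ := T.lt_parent (v := c) (by omega)
  exact T.idx_le c h₁ hn

theorem one_le_of_inSub {y j x : ℕ} (hj : 0 < j) (h : T.InSub y j x) : 1 ≤ y := by
  obtain ⟨c, -, rfl, rfl⟩ := h
  by_contra h0
  have := T.idx_out c (by by_contra hc; have := T.parent_gt c (by omega) (by omega); omega)
  omega

theorem descend_of_inSub_idx {a x : ℕ} (ha : T.parent a ≠ 0)
    (h : T.InSub (T.parent a) (T.idx a) x) : T.Descend x a := by
  obtain ⟨c, hd, hp, hi⟩ := h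
  obtain ⟨hc₁, hcn, -⟩ := T.lt_parent (v := c) (hp ▸ ha)
  obtain ⟨ha₁, han, -⟩ := T.lt_parent ha
  rwa [← T.slot_inj c a hc₁ hcn ha₁ han hp hi]

theorem leftOf_bounds {x y : ℕ} (h : T.LeftOf x y) : 1 ≤ x ∧ x ≤ n ∧ 1 ≤ y ∧ y ≤ n := by
  obtain ⟨-, -, -, -, ⟨_, hx, -⟩, ⟨_, hy, -⟩⟩ := h
  exact ⟨(T.descend_bounds hx).1, (T.descend_bounds hx).2.1, (T.descend_bounds hy).1,
    (T.descend_bounds hy).2.1⟩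

theorem leftOf_irrefl (x : ℕ) : ¬ T.LeftOf x x := by
  rintro ⟨z, j₁, j₂, hj, h₁, h₂⟩
  exact hj.ne (T.inSub_unique h₁ h₂)

theorem leftOf_of_descend_left {x b z : ℕ} (h : T.LeftOf b z) (hxb : T.Descend x b) :
    T.LeftOf x z := by
  obtain ⟨w, j₁, j₂, hj, hb, hz⟩ := h
  exact ⟨w, j₁, j₂, hj, T.inSub_of_descend hxb hb, hz⟩

theorem leftOf_of_descend_right {x b z : ℕ} (h : T.LeftOf z b) (hxb : T.Descend x b) :
    T.LeftOf z x := by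
  obtain ⟨w, j₁, j₂, hj, hz, hb⟩ := h
  exact ⟨w, j₁, j₂, hj, hz, T.inSub_of_descend hxb hb⟩

theorem not_descend_of_leftOf {x y : ℕ} (h : T.LeftOf x y) : ¬ T.Descend x y :=
  fun hd => T.leftOf_irrefl x (T.leftOf_of_descend_right h hd)

theorem not_descend_of_leftOf' {x y : ℕ} (h : T.LeftOf y x) : ¬ T.Descend x y :=
  fun hd => T.leftOf_irrefl x (T.leftOf_of_descend_left h hd)

theorem leftOf_trans {p q r : ℕ} (h₁ : T.LeftOf p q) (h₂ : T.LeftOf q r) : T.LeftOf p r := by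
  obtain ⟨w, a₁, a₂, ha, hpw, hqw⟩ := h₁
  obtain ⟨v, b₁, b₂, hb, hqv, hrv⟩ := h₂
  have hqw' := T.descend_of_inSub (T.one_le_of_inSub (by omega) hqw) hqw
  have hqv' := T.descend_of_inSub (T.one_le_of_inSub (by omega) hrv) hqv
  rcases T.descend_total hqw' hqv' with hwv | hvw
  · rcases eq_or_ne w v with rfl | hne
    · exact ⟨w, a₁, b₂, (T.inSub_unique hqw hqv ▸ ha).trans hb, hpw, hrv⟩
    obtain ⟨i, hi⟩ := T.descend_inSub hwv hne
    obtain rfl := T.inSub_unique (T.inSub_of_descend hqw' hi) hqv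
    have hpw' := T.descend_of_inSub (T.one_le_of_inSub (by omega) hqw) hpw
    exact ⟨v, i, b₂, hb, T.inSub_of_descend hpw' hi, hrv⟩
  · rcases eq_or_ne v w with rfl | hne
    · exact ⟨v, a₁, b₂, ha.trans (T.inSub_unique hqw hqv ▸ hb), hpw, hrv⟩
    obtain ⟨i, hi⟩ := T.descend_inSub hvw hne
    obtain rfl := T.inSub_unique (T.inSub_of_descend hqv' hi) hqw
    have hrv' := T.descend_of_inSub (T.one_le_of_inSub (by omega) hrv) hrv
    exact ⟨w, a₁, i, ha, hpw, T.inSub_of_descend hrv' hi⟩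

theorem leftOf_asymm {x y : ℕ} (h : T.LeftOf x y) : ¬ T.LeftOf y x :=
  fun h' => T.leftOf_irrefl x (T.leftOf_trans h h')

theorem descend_or_leftOf {x y : ℕ} (hx : 1 ≤ x) (hxy : x < y) (hy : y ≤ n) :
    T.Descend x y ∨ T.LeftOf x y ∨ T.LeftOf y x := by
  have hxn : x < n := by omega
  have hxp := T.parent_gt x hx hxn
  have hpn := T.parent_le x hx hxn
  have hdx := T.descend_parent (T.descend_refl hx hxn.le) (by omega)
  rcases lt_trichotomy (T.parent x) y with hlt | heq | hgt
  · rcases descend_or_leftOf (by omega) hlt hy with hd | hL | hL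
    · exact Or.inl (T.descend_trans hdx hd)
    · exact Or.inr (Or.inl (T.leftOf_of_descend_left hL hdx))
    · exact Or.inr (Or.inr (T.leftOf_of_descend_right hL hdx))
  · exact Or.inl (heq ▸ hdx)
  · rcases descend_or_leftOf (by omega) hgt hpn with hd | hL | hL
    · obtain ⟨j, hj⟩ := T.descend_inSub hd hgt.ne
      have hx' : T.InSub (T.parent x) (T.idx x) x := ⟨x, T.descend_refl hx hxn.le, rfl, rfl⟩
      rcases lt_trichotomy j (T.idx x) with hji | rfl | hji
      · exact Or.inr (Or.inr ⟨_, _, _, hji, hj, hx'⟩)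
      · have := T.le_of_descend (T.descend_of_inSub_idx (by omega) hj)
        omega
      · exact Or.inr (Or.inl ⟨_, _, _, hji, hx', hj⟩)
    · exact Or.inr (Or.inr (T.leftOf_of_descend_right hL hdx))
    · exact Or.inr (Or.inl (T.leftOf_of_descend_left hL hdx))
termination_by n - x

theorem card_pos_range {y x : ℕ} (h : T.card y x ≠ 0) : 1 ≤ x ∧ x < y ∧ y ≤ n := by
  unfold card at h
  split_ifs at h with hj hr
  · have hy := T.one_le_of_inSub (Nat.pos_of_ne_zero h) hj.choose_spec
    have hb := T.descend_bounds (T.descend_of_inSub hy hj.choose_spec)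
    exact ⟨hb.1, T.lt_of_inSub hy hj.choose_spec, hb.2.2.2⟩
  · exact ⟨hr.1, hr.2.1, hr.2.2.1⟩
  · exact absurd rfl h

theorem card_of_inSub {y j x : ℕ} (h : T.InSub y j x) : T.card y x = j := by
  have hex : ∃ j, T.InSub y j x := ⟨j, h⟩
  rw [card, dif_pos hex]
  exact T.inSub_unique hex.choose_spec h

theorem card_eq_zero_of_leftOf {x y : ℕ} (h : T.LeftOf x y) : T.card y x = 0 := by
  have hy := (T.leftOf_bounds h).2.2.1
  rw [card, dif_neg fun ⟨_, hj⟩ => T.not_descend_of_leftOf h (T.descend_of_inSub hy hj),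
    if_neg fun hc => hc.2.2.2 h]

theorem card_eq_of_leftOf {x y : ℕ} (h : T.LeftOf y x) (hxy : x < y) : T.card y x = s y := by
  obtain ⟨hy, hyn, hx, -⟩ := T.leftOf_bounds h
  rw [card, dif_neg fun ⟨_, hj⟩ => T.not_descend_of_leftOf' h (T.descend_of_inSub hy hj),
    if_pos ⟨hx, hxy, hyn, T.leftOf_asymm h⟩]

theorem card_eq_of_descend {x b z : ℕ} (hxb : T.Descend x b) (hbz : b < z) (hzn : z ≤ n) :
    T.card z x = T.card z b := by
  obtain ⟨-, -, hb, -⟩ := T.descend_bounds hxb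
  rcases T.descend_or_leftOf hb hbz hzn with hd | hL | hL
  · obtain ⟨j, hj⟩ := T.descend_inSub hd hbz.ne
    rw [T.card_of_inSub hj, T.card_of_inSub (T.inSub_of_descend hxb hj)]
  · rw [T.card_eq_zero_of_leftOf hL, T.card_eq_zero_of_leftOf (T.leftOf_of_descend_left hL hxb)]
  · rw [T.card_eq_of_leftOf hL hbz, T.card_eq_of_leftOf (T.leftOf_of_descend_right hL hxb)
      ((T.le_of_descend hxb).trans_lt hbz)]

theorem card_le_card_of_leftOf {x y z : ℕ} (h : T.LeftOf y x) (hxy : x < y) (hyz : y < z)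
    (hzn : z ≤ n) : T.card z y ≤ T.card z x := by
  obtain ⟨hy, -, hx, -⟩ := T.leftOf_bounds h
  rcases T.descend_or_leftOf hy hyz hzn with hd | hL | hL
  · obtain ⟨j, hj⟩ := T.descend_inSub hd hyz.ne
    rw [T.card_of_inSub hj]
    rcases T.descend_or_leftOf hx (hxy.trans hyz) hzn with hd' | hL' | hL'
    · obtain ⟨j', hj'⟩ := T.descend_inSub hd' (hxy.trans hyz).ne
      rw [T.card_of_inSub hj']
      by_contra hlt
      exact T.leftOf_asymm h ⟨z, j', j, by omega, hj', hj⟩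
    · exact absurd (T.leftOf_of_descend_right hL' hd) (T.leftOf_asymm h)
    · rw [T.card_eq_of_leftOf hL' (hxy.trans hyz)]
      exact T.index_le_of_inSub (by omega) hj
  · rw [T.card_eq_zero_of_leftOf hL]
    exact Nat.zero_le _
  · rw [T.card_eq_of_leftOf hL hyz, T.card_eq_of_leftOf (T.leftOf_trans hL h) (hxy.trans hyz)]

theorem isTransitiveInv_card : IsTransitiveInv T.card := by
  intro x y z hxy hyz
  by_cases h0 : T.card y x = 0
  · exact Or.inl h0
  right
  obtain ⟨hx, -, hyn⟩ := T.card_pos_range h0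
  by_cases hzn : z ≤ n
  swap
  · have : T.card z y = 0 := by_contra fun h => hzn (T.card_pos_range h).2.2
    omega
  rcases T.descend_or_leftOf hx hxy hyn with hd | hL | hL
  · exact (T.card_eq_of_descend hd hyz hzn).ge
  · exact absurd (T.card_eq_zero_of_leftOf hL) h0
  · exact T.card_le_card_of_leftOf hL hxy hyz hzn

theorem card_parent_le_card {a z : ℕ} (ha : 1 ≤ a) (han : a < n) (hz : T.parent a < z) :
    T.card z (T.parent a) ≤ T.card z a := by
  by_cases hzn : z ≤ n
  · exact (T.card_eq_of_descend (T.descend_parent (T.descend_refl ha han.le)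
      (T.parent_gt a ha han).ne_bot) hz hzn).ge
  · have : T.card z (T.parent a) = 0 := by_contra fun h => hzn (T.card_pos_range h).2.2
    omega

theorem card_parent_lt_of_leftOf {a x : ℕ} (ha : 1 ≤ a) (han : a < n)
    (hs : T.card (T.parent a) a < s (T.parent a)) (h : T.LeftOf a x) (hxa : x < a) :
    T.card (T.parent a) a < T.card (T.parent a) x := by
  have hap := T.parent_gt a ha han
  have hda := T.descend_parent (T.descend_refl ha han.le) (by omega)
  rcases T.descend_or_leftOf (T.leftOf_bounds h).2.2.1 (hxa.trans hap)
      (T.parent_le a ha han) with hd | hL | hL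
  · obtain ⟨j, hj⟩ := T.descend_inSub hd (hxa.trans hap).ne
    have ha' : T.InSub (T.parent a) (T.idx a) a := ⟨a, T.descend_refl ha han.le, rfl, rfl⟩
    rw [T.card_of_inSub hj, T.card_of_inSub ha']
    rcases lt_trichotomy j (T.idx a) with hji | rfl | hji
    · exact absurd ⟨_, _, _, hji, hj, ha'⟩ (T.leftOf_asymm h)
    · exact absurd (T.descend_of_inSub_idx (by omega) hj) (T.not_descend_of_leftOf' h)
    · exact hji
  · exact absurd (T.leftOf_of_descend_right hL hda) (T.leftOf_asymm h)
  · rwa [T.card_eq_of_leftOf hL (hxa.trans hap)]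

theorem eq_and_inSubMinus0_of_lt_tcInv_addInv {a b y x : ℕ} (h : T.TamariAscent a b)
    (hlt : T.card y x < tcInv (addInv s T.card b a) y x) : y = b ∧ T.InSubMinus0 a x := by
  obtain ⟨ha, han, rfl, hs⟩ := h
  obtain ⟨rfl, hx | hpos, hle⟩ := T.isTransitiveInv_card.eq_and_le_of_lt_tcInv_addInv
    (fun y x h => (T.card_pos_range h).2.1) (T.parent_gt a ha han)
    (fun z hz => T.card_parent_le_card ha han hz) hlt
  · exact ⟨rfl, Or.inl hx⟩
  refine ⟨rfl, Or.inr ?_⟩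
  obtain ⟨hx, hxa, -⟩ := T.card_pos_range hpos.ne'
  rcases T.descend_or_leftOf hx hxa han.le with hd | hL | hL
  · obtain ⟨j, hj⟩ := T.descend_inSub hd hxa.ne
    exact ⟨j, T.card_of_inSub hj ▸ hpos, hj⟩
  · exact absurd (T.card_eq_zero_of_leftOf hL) hpos.ne'
  · exact absurd hle (not_le.2 (T.card_parent_lt_of_leftOf ha han hs hL hxa))

theorem fst_eq_and_inSubMinus0_of_mem_Aset {Z : SDecTree n s} {a b : ℕ}
    (hZ : T.IsTamRotation Z a b) {p : ℕ × ℕ} (hp : p ∈ T.Aset Z) :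
    p.1 = b ∧ T.InSubMinus0 a p.2 := by
  obtain ⟨hx, hxy, hy⟩ := Z.card_pos_range (Nat.ne_zero_of_lt hp)
  have hp' : T.card p.1 p.2 < Z.card p.1 p.2 := hp
  rw [hZ.2 _ _ hx hxy hy] at hp'
  exact T.eq_and_inSubMinus0_of_lt_tcInv_addInv hZ.1 hp'

theorem descend_of_inSubMinus0 {a x : ℕ} (ha : 1 ≤ a) (han : a ≤ n) (h : T.InSubMinus0 a x) :
    T.Descend x a := by
  rcases h with rfl | ⟨j, -, hj⟩
  · exact T.descend_refl ha han
  · exact T.descend_of_inSub ha hj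

end SDecTree

theorem tam_no_common_inversions_added_general (n : ℕ) (s : ℕ → ℕ) (T Z Q : SDecTree n s)
    (a b c d : ℕ) (hac : a < c)
    (hZ : SDecTree.IsTamRotation T Z a b) (hQ : SDecTree.IsTamRotation T Q c d) :
    Disjoint (SDecTree.Aset T Z) (SDecTree.Aset T Q) ∧
    Disjoint (SDecTree.Aset T Z) (SDecTree.Fset T a b c d) ∧
    Disjoint (SDecTree.Aset T Q) (SDecTree.Fset T a b c d) := by
  obtain ⟨ha, han, hpa, -⟩ := hZ.1
  obtain ⟨hc, hcn, hpc, -⟩ := hQ.1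
  have hcd : c < d := hpc ▸ T.parent_gt c hc hcn
  refine ⟨Set.disjoint_left.2 ?_, Set.disjoint_left.2 ?_, Set.disjoint_left.2 ?_⟩
  · intro p hpZ hpQ
    obtain ⟨hpb, hpa'⟩ := T.fst_eq_and_inSubMinus0_of_mem_Aset hZ hpZ
    obtain ⟨hpd, hpc'⟩ := T.fst_eq_and_inSubMinus0_of_mem_Aset hQ hpQ
    have := T.eq_of_parent_eq_of_descend (T.descend_of_inSubMinus0 ha han.le hpa')
      (T.descend_of_inSubMinus0 hc hcn.le hpc') (by rw [hpa, hpc, ← hpb, hpd])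
    omega
  · rintro p hpZ ⟨rfl, -, hpd, -⟩
    have := (T.fst_eq_and_inSubMinus0_of_mem_Aset hZ hpZ).1
    omega
  · rintro p hpQ ⟨-, hca, -, hpa'⟩
    have hp0 := T.inSub_of_descend (T.descend_of_inSubMinus0 ha han.le hpa') hca
    rcases (T.fst_eq_and_inSubMinus0_of_mem_Aset hQ hpQ).2 with hp | ⟨j, hj, hjc⟩
    · exact absurd (T.lt_of_inSub hc (hp ▸ hp0)) (lt_irrefl c)
    · exact hj.ne (T.inSub_unique hp0 hjc)

/-- for Tamari tree ascents `(a,b)` and `(c,d)` of an `s`-Tamari tree `T`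
with `a < c`, the sets `A^Tam_T(a,b)`, `A^Tam_T(c,d)` and `F^Tam_T(a,c)` are pairwise
disjoint. -/
theorem tam_no_common_inversions_added (n : ℕ) (s : ℕ → ℕ) (T Z Q : SDecTree n s)
    (a b c d : ℕ) (hT : SDecTree.IsTamari T) (hac : a < c)
    (hZ : SDecTree.IsTamRotation T Z a b) (hQ : SDecTree.IsTamRotation T Q c d) :
    Disjoint (SDecTree.Aset T Z) (SDecTree.Aset T Q) ∧
    Disjoint (SDecTree.Aset T Z) (SDecTree.Fset T a b c d) ∧
    Disjoint (SDecTree.Aset T Q) (SDecTree.Fset T a b c d) :=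
  tam_no_common_inversions_added_general n s T Z Q a b c d hac hZ hQ
end

section
/- Let s be a weak composition, T an s-Tamari tree, and (a,b), (c,d) Tamari tree ascents of T with a < c. Let Z and Q be the s-Tamari rotations of T along (a,b) and (c,d) respectively. Then (c,d) is always a Tamari tree ascent of Z; and if (a,b) is not a Tamari tree ascent of Q, then b = c and a is the 0th child of c in T. -/
open scoped Classical

/-!
In an `s`-Tamari tree a positive `#_T(y,x)` forces `x` into a non-leftmost subtree of `y`,
so `inv T + {(b,e) : e ∈ T^a ∖ 0}` is already transitive: the rotation along `(a,b)` adds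
exactly these inversions. A vertex `x` lies below `y > x` iff `#(z,x) = #(z,y)` for all
`z > y`, and the parent of `x` is its least proper ancestor. Rotating along `(a,b)` leaves
all `#(y,x)` with `x > a` unchanged, hence the parent of every `c > a`. Rotating along `(c,d)`
only raises `#(d,·)` on `T^c ∖ 0`; the Tamari inequalities through `c` show that this cannot
give `a < c` a new ancestor below `b`, and `a` stays below `b` unless `a ∉ T^c ∖ 0` while
`b = c ∈ T^c ∖ 0`, i.e. unless `a` is the `0`-th child of `c`.
-/

lemma tcInv_eq_of_forall_le {I J : ℕ → ℕ → ℕ} (hJ : IsTransitiveInv J)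
    (hIJ : ∀ y x, I y x ≤ J y x)
    (hmin : ∀ J', IsTransitiveInv J' → (∀ y x, I y x ≤ J' y x) →
      ∀ y x, J y x ≤ J' y x) :
    tcInv I = J := by
  funext y x
  have hJmem : J y x ∈ {m | ∃ J' : ℕ → ℕ → ℕ, IsTransitiveInv J' ∧
      (∀ y' x', I y' x' ≤ J' y' x') ∧ J' y x = m} := ⟨J, hJ, hIJ, rfl⟩
  refine le_antisymm (csInf_le (OrderBot.bddBelow _) hJmem) (le_csInf ⟨_, hJmem⟩ ?_)
  rintro m ⟨J', hJ', hIJ', rfl⟩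
  exact hmin J' hJ' hIJ' y x

namespace SDecTree

variable {n : ℕ} {s : ℕ → ℕ} {T Z Q : SDecTree n s} {a b c d x y z w u v j j' : ℕ}

lemma bounds_of_parent_pos (h : 0 < T.parent x) : 1 ≤ x ∧ x < n := by
  by_contra hx
  have := T.parent_out x (by omega)
  omega

lemma lt_parent_of_parent_pos (h : 0 < T.parent x) : x < T.parent x :=
  T.parent_gt x (bounds_of_parent_pos h).1 (bounds_of_parent_pos h).2

lemma strictMonoOn_iterate_parent {k : ℕ}
    (hk : ∀ m ≤ k, 1 ≤ T.parent^[m] x ∧ T.parent^[m] x ≤ n) :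
    StrictMonoOn (T.parent^[·] x) (Set.Iic k) :=
  strictMonoOn_Iic_of_lt_succ fun m hm => by
    have hpos := (hk (m + 1) (Order.succ_le_of_lt hm)).1
    rw [Function.iterate_succ_apply'] at hpos
    show T.parent^[m] x < T.parent^[m + 1] x
    rw [Function.iterate_succ_apply']
    exact lt_parent_of_parent_pos hpos

lemma Descend.bounds (h : T.Descend x y) : 1 ≤ x ∧ x ≤ n ∧ 1 ≤ y ∧ y ≤ n := by
  obtain ⟨k, rfl, hk⟩ := h
  exact ⟨(hk 0 k.zero_le).1, (hk 0 k.zero_le).2, (hk k le_rfl).1, (hk k le_rfl).2⟩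

lemma Descend.le (h : T.Descend x y) : x ≤ y := by
  obtain ⟨k, rfl, hk⟩ := h
  exact (strictMonoOn_iterate_parent hk).monotoneOn (Set.mem_Iic.2 k.zero_le)
    (Set.mem_Iic.2 le_rfl) k.zero_le

lemma Descend.parent_le (h : T.Descend x y) (hne : x ≠ y) : T.parent x ≤ y := by
  obtain ⟨k, rfl, hk⟩ := h
  have hk0 : 1 ≤ k := Nat.one_le_iff_ne_zero.2 fun h0 => hne (by simp [h0])
  exact (strictMonoOn_iterate_parent hk).monotoneOn (Set.mem_Iic.2 hk0)
    (Set.mem_Iic.2 le_rfl) hk0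

lemma descend_refl_s17 (h1 : 1 ≤ x) (hn : x ≤ n) : T.Descend x x :=
  ⟨0, rfl, fun m hm => by simpa [Nat.le_zero.1 hm] using ⟨h1, hn⟩⟩

lemma descend_parent_s17 (h1 : 1 ≤ x) (hn : x < n) : T.Descend x (T.parent x) := by
  refine ⟨1, rfl, fun m hm => ?_⟩
  interval_cases m
  · simpa using ⟨h1, hn.le⟩
  · exact ⟨h1.trans (T.parent_gt x h1 hn).le, T.parent_le x h1 hn⟩

lemma Descend.trans (h₁ : T.Descend x y) (h₂ : T.Descend y z) : T.Descend x z := by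
  obtain ⟨k, rfl, hk⟩ := h₁
  obtain ⟨l, rfl, hl⟩ := h₂
  refine ⟨l + k, Function.iterate_add_apply _ _ _ _, fun m hm => ?_⟩
  rcases Nat.le_total m k with h | h
  · exact hk m h
  · obtain ⟨i, rfl⟩ := Nat.exists_eq_add_of_le' h
    rw [Function.iterate_add_apply]
    exact hl i (by omega)

/-- The ancestors of a vertex form a chain. -/
lemma Descend.of_descend_of_le (h₁ : T.Descend x y) (h₂ : T.Descend x z) (hyz : y ≤ z) :
    T.Descend y z := by
  obtain ⟨k, rfl, hk⟩ := h₁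
  obtain ⟨l, rfl, hl⟩ := h₂
  have hkl : k ≤ l := by
    by_contra! hlk
    exact absurd hyz (not_le.2 ((strictMonoOn_iterate_parent hk) (Set.mem_Iic.2 hlk.le)
      (Set.mem_Iic.2 le_rfl) hlk))
  refine ⟨l - k, ?_, fun m hm => ?_⟩
  · rw [← Function.iterate_add_apply, Nat.sub_add_cancel hkl]
  · rw [← Function.iterate_add_apply]
    exact hl (m + k) (by omega)

lemma descend_root (h1 : 1 ≤ x) (hn : x ≤ n) : T.Descend x n := by
  induction h : n - x using Nat.strong_induction_on generalizing x with
  | _ k ih =>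
    rcases hn.lt_or_eq with hlt | rfl
    · have hp := T.parent_gt x h1 hlt
      exact (descend_parent_s17 h1 hlt).trans
        (ih _ (by omega) (h1.trans hp.le) (T.parent_le x h1 hlt) rfl)
    · exact descend_refl_s17 h1 le_rfl

lemma InSub.descend (h : T.InSub y j x) (hy : 0 < y) : T.Descend x y := by
  obtain ⟨c, hc, rfl, -⟩ := h
  have hcn := bounds_of_parent_pos hy
  exact hc.trans (descend_parent_s17 hcn.1 hcn.2)

lemma InSub.lt (h : T.InSub y j x) (hy : 0 < y) : x < y := by
  obtain ⟨c, hc, rfl, -⟩ := h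
  exact hc.le.trans_lt (lt_parent_of_parent_pos hy)

lemma InSub.of_descend (h : T.InSub w j y) (hxy : T.Descend x y) : T.InSub w j x := by
  obtain ⟨c, hc, hpc, hic⟩ := h
  exact ⟨c, hxy.trans hc, hpc, hic⟩

lemma InSub.of_descend_of_lt (h : T.InSub w j x) (hxy : T.Descend x y) (hyw : y < w) :
    T.InSub w j y := by
  obtain ⟨c, hc, rfl, hic⟩ := h
  have hyc : y ≤ c := by
    by_contra! hcy
    have := (hc.of_descend_of_le hxy hcy.le).parent_le hcy.ne
    omega
  exact ⟨c, hxy.of_descend_of_le hc hyc, rfl, hic⟩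

lemma InSub.zero_eq (h : T.InSub 0 j x) : j = 0 := by
  obtain ⟨c, hc, hpc, rfl⟩ := h
  have hcn : c = n := by
    by_contra hcn
    have := T.parent_gt c hc.bounds.2.2.1 (lt_of_le_of_ne hc.bounds.2.2.2 hcn)
    omega
  exact hcn ▸ T.idx_out n (Or.inr le_rfl)

lemma InSub.unique (hy : 0 < y) (h : T.InSub y j x) (h' : T.InSub y j' x) : j = j' := by
  obtain ⟨c, hc, hpc, rfl⟩ := h
  obtain ⟨c', hc', hpc', rfl⟩ := h'
  suffices c = c' by rw [this]
  by_contra hne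
  wlog hlt : c < c' generalizing c c'
  · exact this c' hc' hpc' c hc hpc (Ne.symm hne) (lt_of_le_of_ne (not_lt.1 hlt) (Ne.symm hne))
  have := (hc.of_descend_of_le hc' hlt.le).parent_le hlt.ne
  have := lt_parent_of_parent_pos (x := c') (hpc' ▸ hy)
  omega

lemma pos_of_inSub_ne (hx : T.InSub z u x) (hy : T.InSub z v y) (huv : u ≠ v) : 0 < z := by
  by_contra! hz
  obtain rfl : z = 0 := by omega
  exact huv (hx.zero_eq.trans hy.zero_eq.symm)

lemma exists_inSub_of_descend (h : T.Descend x y) (hne : x ≠ y) : ∃ j, T.InSub y j x := by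
  obtain ⟨_ | k, rfl, hk⟩ := h
  · exact absurd rfl hne
  exact ⟨_, T.parent^[k] x, ⟨k, rfl, fun m hm => hk m (by omega)⟩,
    (Function.iterate_succ_apply' _ _ _).symm, rfl⟩

lemma card_eq_of_inSub (hy : 0 < y) (h : T.InSub y j x) : T.card y x = j := by
  have hex : ∃ j, T.InSub y j x := ⟨j, h⟩
  rw [card, dif_pos hex]
  exact hex.choose_spec.unique hy h

lemma card_eq_of_not_inSub (h : ¬ ∃ j, T.InSub y j x) :
    T.card y x = if 1 ≤ x ∧ x < y ∧ y ≤ n ∧ ¬ T.LeftOf x y then s y else 0 := by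
  rw [card, dif_neg h]

lemma leftOf_iff_of_descend (hxy : T.Descend x y) (hyz : y < z) :
    T.LeftOf x z ↔ T.LeftOf y z := by
  constructor
  · rintro ⟨w, j₁, j₂, hj, hx, hz⟩
    exact ⟨w, j₁, j₂, hj, hx.of_descend_of_lt hxy
      (hyz.trans (hz.lt (pos_of_inSub_ne hx hz hj.ne))), hz⟩
  · rintro ⟨w, j₁, j₂, hj, hy, hz⟩
    exact ⟨w, j₁, j₂, hj, hy.of_descend hxy, hz⟩

lemma card_eq_of_descend_s17 (hxy : T.Descend x y) (hyz : y < z) :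
    T.card z x = T.card z y := by
  have hz : 0 < z := by omega
  by_cases hx : ∃ j, T.InSub z j x
  · obtain ⟨j, hj⟩ := hx
    rw [card_eq_of_inSub hz hj, card_eq_of_inSub hz (hj.of_descend_of_lt hxy hyz)]
  have hy : ¬ ∃ j, T.InSub z j y := fun ⟨j, hj⟩ => hx ⟨j, hj.of_descend hxy⟩
  have hb := hxy.bounds
  rw [card_eq_of_not_inSub hx, card_eq_of_not_inSub hy, leftOf_iff_of_descend hxy hyz]
  have hxz : x < z := hxy.le.trans_lt hyz
  by_cases hzn : z ≤ n
  · simp only [hb.1, hb.2.2.1, hxz, hyz, hzn, true_and]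
  · simp only [hzn, false_and, and_false]

/-- Two incomparable vertices lie in different child subtrees of their lowest common
ancestor. -/
lemma exists_inSub_ne_of_not_descend (hx : 1 ≤ x) (hxn : x ≤ n) (hy : 1 ≤ y) (hyn : y ≤ n)
    (hxy : ¬ T.Descend x y) (hyx : ¬ T.Descend y x) :
    ∃ z u v, u ≠ v ∧ T.InSub z u x ∧ T.InSub z v y := by
  set S : Set ℕ := {w | T.Descend x w ∧ T.Descend y w}
  obtain ⟨hzx, hzy⟩ : sInf S ∈ S :=
    Nat.sInf_mem ⟨n, descend_root hx hxn, descend_root hy hyn⟩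
  obtain ⟨u, c, hxc, hc, rfl⟩ := exists_inSub_of_descend hzx fun h => hyx (h ▸ hzy)
  obtain ⟨v, c', hyc, hc', rfl⟩ := exists_inSub_of_descend hzy fun h => hxy (h ▸ hzx)
  refine ⟨sInf S, _, _, fun huv => ?_, ⟨c, hxc, hc, rfl⟩, ⟨c', hyc, hc', rfl⟩⟩
  have hpos : 0 < T.parent c := hc ▸ hzx.bounds.2.2.1
  have hpos' : 0 < T.parent c' := hc' ▸ hzx.bounds.2.2.1
  have hcc : c = c' := T.slot_inj c c' (bounds_of_parent_pos hpos).1 (bounds_of_parent_pos hpos).2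
    (bounds_of_parent_pos hpos').1 (bounds_of_parent_pos hpos').2 (hc.trans hc'.symm) huv
  have hcS : c ∈ S := ⟨hxc, hcc ▸ hyc⟩
  have := Nat.sInf_le hcS
  have := lt_parent_of_parent_pos hpos
  omega

lemma descend_iff_card_eq (hx : 1 ≤ x) (hxy : x < y) (hyn : y ≤ n) :
    T.Descend x y ↔ ∀ z, y < z → z ≤ n → T.card z x = T.card z y := by
  refine ⟨fun h z hz _ => card_eq_of_descend_s17 h hz, fun h => ?_⟩
  by_contra hnd
  obtain ⟨z, u, v, huv, hu, hv⟩ := exists_inSub_ne_of_not_descend hx (by omega) (by omega) hyn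
    hnd fun h => absurd h.le (by omega)
  have hz := pos_of_inSub_ne hu hv huv
  refine huv ?_
  rw [← card_eq_of_inSub hz hu, ← card_eq_of_inSub hz hv]
  exact h z (hv.lt hz) (hv.descend hz).bounds.2.2.2

lemma IsTamari.leftOf_of_not_descend (hT : T.IsTamari) (hx : 1 ≤ x) (hxy : x < y)
    (hyn : y ≤ n) (hnd : ¬ T.Descend x y) : T.LeftOf x y := by
  obtain ⟨z, u, v, huv, hu, hv⟩ := exists_inSub_ne_of_not_descend hx (by omega) (by omega) hyn
    hnd fun h => absurd h.le (by omega)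
  have hz := pos_of_inSub_ne hu hv huv
  have hle := hT x y z hxy (hv.lt hz)
  rw [card_eq_of_inSub hz hu, card_eq_of_inSub hz hv] at hle
  exact ⟨z, u, v, lt_of_le_of_ne hle huv, hu, hv⟩

lemma IsTamari.exists_inSub_of_card_ne_zero (hT : T.IsTamari) (hxy : x < y)
    (h : T.card y x ≠ 0) : ∃ j, 0 < j ∧ T.InSub y j x := by
  by_cases hex : ∃ j, T.InSub y j x
  · obtain ⟨j, hj⟩ := hex
    exact ⟨j, Nat.pos_of_ne_zero (card_eq_of_inSub (by omega) hj ▸ h), hj⟩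
  rw [card_eq_of_not_inSub hex] at h
  split_ifs at h with hcond
  · obtain ⟨hx, -, hyn, hnl⟩ := hcond
    exact absurd (hT.leftOf_of_not_descend hx hxy hyn
      fun hd => hex (exists_inSub_of_descend hd hxy.ne)) hnl
  · exact absurd rfl h

lemma InSubMinus0.descend (h : T.InSubMinus0 a x) (ha : 1 ≤ a) (han : a ≤ n) :
    T.Descend x a := by
  rcases h with rfl | ⟨j, -, hj⟩
  · exact descend_refl_s17 ha han
  · exact hj.descend (by omega)

lemma InSubMinus0.of_inSub (h : T.InSubMinus0 a y) (hj : 0 < j) (hx : T.InSub y j x) :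
    T.InSubMinus0 a x := by
  have hy : 0 < y := Nat.pos_of_ne_zero fun hy => hj.ne' (hy ▸ hx).zero_eq
  rcases h with rfl | ⟨j', hj', hy'⟩
  · exact Or.inr ⟨j, hj, hx⟩
  · exact Or.inr ⟨j', hj', hy'.of_descend (hx.descend hy)⟩

/-- The multiplicities of `inv T + {(b, e) : e ∈ T^a ∖ 0}`. -/
noncomputable def tamRotCard (T : SDecTree n s) (a b : ℕ) (y x : ℕ) : ℕ :=
  T.card y x + if y = b ∧ T.InSubMinus0 a x then 1 else 0

lemma TamariAscent.lt (h : T.TamariAscent a b) : a < b :=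
  h.2.2.1 ▸ T.parent_gt a h.1 h.2.1

lemma TamariAscent.le_root (h : T.TamariAscent a b) : b ≤ n :=
  h.2.2.1 ▸ T.parent_le a h.1 h.2.1

lemma TamariAscent.descend (h : T.TamariAscent a b) : T.Descend a b :=
  h.2.2.1 ▸ descend_parent_s17 h.1 h.2.1

lemma isTransitiveInv_tamRotCard (hT : T.IsTamari) (h : T.TamariAscent a b) :
    IsTransitiveInv (T.tamRotCard a b) := by
  intro x y z hxy hyz
  by_cases h0 : T.tamRotCard a b y x = 0
  · exact Or.inl h0
  right
  unfold tamRotCard at h0 ⊢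
  by_cases hyx : y = b ∧ T.InSubMinus0 a x
  · obtain ⟨rfl, hx⟩ := hyx
    have hxb : T.Descend x y := (hx.descend h.1 (h.lt.le.trans h.le_root)).trans h.descend
    rw [card_eq_of_descend_s17 hxb hyz, if_neg (by omega), if_neg (by omega)]
  · obtain ⟨j, hj, hjx⟩ := hT.exists_inSub_of_card_ne_zero hxy (by simpa [hyx] using h0)
    rw [card_eq_of_descend_s17 (hjx.descend (by omega)) hyz]
    gcongr
    split_ifs with hzy hzx
    exacts [le_rfl, absurd ⟨hzy.1, hzy.2.of_inSub hj hjx⟩ hzx, zero_le_one, le_rfl]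

lemma addInv_le_tamRotCard (y x : ℕ) :
    addInv s T.card b a y x ≤ T.tamRotCard a b y x := by
  unfold addInv tamRotCard
  split_ifs with h h'
  · exact (min_le_left _ _).trans le_rfl
  · exact absurd ⟨h.1, Or.inl h.2⟩ h'
  all_goals omega

/-- Transitivity at `x < a < b` forces the extra inversion `(b, a)` onto every `(b, x)`
with `x ∈ T^a ∖ 0`. -/
lemma tamRotCard_le (h : T.TamariAscent a b) {J : ℕ → ℕ → ℕ} (hJ : IsTransitiveInv J)
    (hle : ∀ y x, addInv s T.card b a y x ≤ J y x) (y x : ℕ) :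
    T.tamRotCard a b y x ≤ J y x := by
  have hba : T.card b a + 1 ≤ J b a := by
    simpa [addInv, Nat.min_eq_left h.2.2.2] using hle b a
  unfold tamRotCard
  split_ifs with hyx
  · obtain ⟨rfl, rfl | ⟨j, hj, hjx⟩⟩ := hyx
    · exact hba
    · have hxa := hjx.lt h.1
      have hax : J a x ≠ 0 := by
        have hIax : addInv s T.card y a a x = j := by
          rw [addInv, if_neg fun hh => h.lt.ne hh.1, card_eq_of_inSub h.1 hjx]
        have := hle a x
        omega
      rw [card_eq_of_descend_s17 (hjx.descend h.1) h.lt]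
      exact hba.trans ((hJ x a y hxa h.lt).resolve_left hax)
  · simpa [addInv, if_neg fun hh : y = b ∧ x = a => hyx ⟨hh.1, Or.inl hh.2⟩] using hle y x

lemma tcInv_addInv_eq_tamRotCard (hT : T.IsTamari) (h : T.TamariAscent a b) :
    tcInv (addInv s T.card b a) = T.tamRotCard a b :=
  tcInv_eq_of_forall_le (isTransitiveInv_tamRotCard hT h) addInv_le_tamRotCard
    fun _ hJ hle => tamRotCard_le h hJ hle

/-- The parent of `x` is its least proper ancestor. -/
lemma parent_eq_of_descend {U V : SDecTree n s} (hx : 1 ≤ x) (hxn : x < n)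
    (hV : V.Descend x (U.parent x))
    (hUV : ∀ y, x < y → y < U.parent x → V.Descend x y → U.Descend x y) :
    V.parent x = U.parent x := by
  have hU := U.parent_gt x hx hxn
  have hV' := V.parent_gt x hx hxn
  have hle := hV.parent_le hU.ne
  by_contra hne
  have := (hUV _ hV' (lt_of_le_of_ne hle hne) (descend_parent_s17 hx hxn)).parent_le hV'.ne
  omega

lemma IsTamRotation.card_eq (hT : T.IsTamari) (hZ : T.IsTamRotation Z a b) (hx : 1 ≤ x)
    (hxy : x < y) (hyn : y ≤ n) : Z.card y x = T.tamRotCard a b y x := by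
  rw [hZ.2 y x hx hxy hyn, tcInv_addInv_eq_tamRotCard hT hZ.1]

lemma IsTamRotation.card_eq_of_lt (hT : T.IsTamari) (hZ : T.IsTamRotation Z a b)
    (hax : a < x) (hxy : x < y) (hyn : y ≤ n) : Z.card y x = T.card y x := by
  rw [hZ.card_eq hT (by omega) hxy hyn, tamRotCard, if_neg fun h => ?_, add_zero]
  exact absurd (h.2.descend hZ.1.1 (hZ.1.lt.le.trans hZ.1.le_root)).le (by omega)

theorem IsTamRotation.tamariAscent_of_lt (hT : T.IsTamari) (hZ : T.IsTamRotation Z a b)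
    (h : T.TamariAscent c d) (hac : a < c) : Z.TamariAscent c d := by
  obtain ⟨hc, hcn, rfl, hcd⟩ := h
  have hdesc : ∀ y, c < y → y ≤ n → (Z.Descend c y ↔ T.Descend c y) := by
    intro y hy hyn
    rw [descend_iff_card_eq hc hy hyn, descend_iff_card_eq hc hy hyn]
    refine forall_congr' fun z => forall_congr' fun hz => forall_congr' fun hzn => ?_
    rw [hZ.card_eq_of_lt hT hac (hy.trans hz) hzn, hZ.card_eq_of_lt hT (by omega) hz hzn]
  have hp := T.parent_gt c hc hcn
  have hpn := T.parent_le c hc hcn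
  refine ⟨hc, hcn, parent_eq_of_descend hc hcn ((hdesc _ hp hpn).2 (descend_parent_s17 hc hcn))
    fun y hy hyp hZy => (hdesc y hy (by omega)).1 hZy, ?_⟩
  rwa [hZ.card_eq_of_lt hT hac hp hpn]

lemma inSubMinus0_iff_of_lt (ha : 1 ≤ a) (han : a < n) (hac : a < c)
    (hexc : ¬ (T.parent a = c ∧ T.idx a = 0)) :
    T.InSubMinus0 c a ↔ T.InSubMinus0 c (T.parent a) := by
  have hab := descend_parent_s17 (T := T) ha han
  constructor
  · rintro (rfl | ⟨j, hj, hja⟩)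
    · exact absurd hac (lt_irrefl _)
    have hac' := hja.descend (by omega)
    rcases (hac'.parent_le hac.ne).lt_or_eq with hbc | hbc
    · obtain ⟨j', hjb⟩ := exists_inSub_of_descend (hab.of_descend_of_le hac' hbc.le) hbc.ne
      exact Or.inr ⟨j', (hja.unique (by omega) (hjb.of_descend hab)) ▸ hj, hjb⟩
    · exact Or.inl hbc
  · rintro (hbc | ⟨j, hj, hjb⟩)
    · exact Or.inr ⟨T.idx a, Nat.pos_of_ne_zero fun h0 => hexc ⟨hbc, h0⟩,
        a, descend_refl_s17 ha han.le, hbc, rfl⟩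
    · exact Or.inr ⟨j, hj, hjb.of_descend hab⟩

lemma IsTamRotation.descend_parent_of_lt (hT : T.IsTamari) (hQ : T.IsTamRotation Q c d)
    (ha : 1 ≤ a) (han : a < n) (hac : a < c) (hexc : ¬ (T.parent a = c ∧ T.idx a = 0)) :
    Q.Descend a (T.parent a) := by
  have hab := T.parent_gt a ha han
  rw [descend_iff_card_eq ha hab (T.parent_le a ha han)]
  intro z hz hzn
  rw [hQ.card_eq hT ha (hab.trans hz) hzn, hQ.card_eq hT (by omega) hz hzn, tamRotCard,
    tamRotCard, card_eq_of_descend_s17 (descend_parent_s17 ha han) hz,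
    inSubMinus0_iff_of_lt ha han hac hexc]

/-- Only `#(d, ·)` changes, and it could separate `a` from `y` only if exactly one of them lies
in `T^c ∖ 0`; the Tamari inequalities through `c` rule out both cases. -/
lemma IsTamRotation.not_descend_of_lt_parent (hT : T.IsTamari) (hQ : T.IsTamRotation Q c d)
    (ha : 1 ≤ a) (han : a < n) (hac : a < c) (hay : a < y) (hyb : y < T.parent a) :
    ¬ Q.Descend a y := by
  have hcd := hQ.1.lt
  have hdn := hQ.1.le_root
  have hbn := T.parent_le a ha han
  intro hQd
  refine absurd ((descend_iff_card_eq ha hay (by omega)).2 fun z hz hzn => ?_)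
    fun h => absurd (h.parent_le hay.ne) (not_le.2 hyb)
  have hQz := (descend_iff_card_eq ha hay (by omega)).1 hQd z hz hzn
  rw [hQ.card_eq hT ha (by omega) hzn, hQ.card_eq hT (by omega) hz hzn, tamRotCard,
    tamRotCard] at hQz
  by_cases hzd : z = d
  · rw [hzd] at hQz hz ⊢
    have hTa := hT a c d hac hcd
    by_cases hBa : T.InSubMinus0 c a <;> by_cases hBy : T.InSubMinus0 c y <;>
      simp only [hBa, hBy, and_true, and_false, if_true, if_false] at hQz
    · omega
    · have hac' := hBa.descend (by omega) (by omega)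
      have := hac'.parent_le hac.ne
      have := hT y c d (by omega) hcd
      rw [card_eq_of_descend_s17 hac' hcd] at hTa hQz
      omega
    · rw [card_eq_of_descend_s17 (hBy.descend (by omega) (by omega)) hcd] at hQz
      omega
    · omega
  · simpa [hzd] using hQz

theorem IsTamRotation.tamariAscent_of_gt (hT : T.IsTamari) (hQ : T.IsTamRotation Q c d)
    (h : T.TamariAscent a b) (hac : a < c) (hexc : ¬ (b = c ∧ T.idx a = 0)) :
    Q.TamariAscent a b := by
  obtain ⟨ha, han, rfl, hab⟩ := h
  refine ⟨ha, han, parent_eq_of_descend ha han (hQ.descend_parent_of_lt hT ha han hac hexc)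
    fun y hay hyb hQy => absurd hQy (hQ.not_descend_of_lt_parent hT ha han hac hay hyb), ?_⟩
  have hbd : ¬ (T.parent a = d ∧ T.InSubMinus0 c a) := fun ⟨hbd, hBa⟩ =>
    absurd ((hBa.descend (by omega) (hQ.1.lt.le.trans hQ.1.le_root)).parent_le hac.ne)
      (by rw [hbd]; exact not_le.2 hQ.1.lt)
  rwa [hQ.card_eq hT ha (T.parent_gt a ha han) (T.parent_le a ha han), tamRotCard, if_neg hbd,
    add_zero]

end SDecTree

/-- `(c,d)` is always a Tamari tree ascent of `Z`; and if `(a,b)` is not a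
Tamari tree ascent of `Q`, then `b = c` and `a` is the `0`-th child of `c` in `T`. -/
theorem tam_stop_being_ascent (n : ℕ) (s : ℕ → ℕ) (T Z Q : SDecTree n s)
    (a b c d : ℕ) (hT : SDecTree.IsTamari T) (hac : a < c)
    (hZ : SDecTree.IsTamRotation T Z a b) (hQ : SDecTree.IsTamRotation T Q c d) :
    Z.TamariAscent c d ∧
    (¬ Q.TamariAscent a b → b = c ∧ T.parent a = c ∧ T.idx a = 0) := by
  refine ⟨hZ.tamariAscent_of_lt hT hQ.1 hac, fun hnQ => ?_⟩
  have hpab : T.parent a = b := hZ.1.2.2.1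
  by_contra hexc
  exact hnQ (hQ.tamariAscent_of_gt hT hZ.1 hac
    fun ⟨hbc, h0⟩ => hexc ⟨hbc, hpab.trans hbc, h0⟩)
end
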